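/- arXiv:1707.09285 — 4 statements merged into one kernel-verified Lean document; each statement's English description precedes it below -/
import Mathlib

section
/- Let A_1, …, A_n̂ be a partition of the nodes of G with partition matrix u, and let γ > 0. Then the ℓ-th entry of the row vector kᵀu equals vol A_ℓ, so that ‖kᵀu‖₂² = Σ_{ℓ=1}^{n̂} (vol A_ℓ)², and the modularity satisfies Q = 1 − (1/(2m)) ( |u|_TV + (γ/(2m)) ‖kᵀu‖₂² ). Consequently, a partition maximizes modularity if and only if its partition matrix minimizes |u|_TV + (γ/(2m)) ‖kᵀu‖₂² over all partition matrices. -/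
/-!
For 0/1 vectors `|a - b| = a + b - 2ab`; since each row of a partition matrix sums to one,
the total variation of a partition matrix is the total edge weight `2m` minus the weight
inside the parts. The null-model term `∑_{i,j ∈ A} k_i k_j` is `(vol A)²`. Substituting both
into the definition of `Q` gives `Q = 1 - (1/2m) (|u|_TV + (γ/2m) ‖kᵀu‖²)`, and since
`1/2m > 0` the maximizers of `Q` are the minimizers of the functional.
-/

open Finset

/-- The volume of a node subset `S`: total degree of its nodes. -/
def graphVol {N : ℕ} (k : Fin N → ℝ) (S : Finset (Fin N)) : ℝ :=
  ∑ i ∈ S, k i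

/-- The graph total variation of a function on the nodes. -/
noncomputable def graphTV {N : ℕ} (W : Matrix (Fin N) (Fin N) ℝ) (f : Fin N → ℝ) : ℝ :=
  (1 / 2) * ∑ i, ∑ j, W i j * |f i - f j|

/-- The graph total variation of a matrix: sum of the TVs of its columns. -/
noncomputable def graphTVMat {N n : ℕ} (W : Matrix (Fin N) (Fin N) ℝ)
    (u : Matrix (Fin N) (Fin n) ℝ) : ℝ :=
  ∑ ℓ, graphTV W (fun i => u i ℓ)

/-- `A` is a partition of the nodes: every node lies in exactly one part. -/
def IsPartition {N n : ℕ} (A : Fin n → Finset (Fin N)) : Prop :=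
  ∀ i : Fin N, ∃! ℓ, i ∈ A ℓ

/-- The partition matrix of a partition `A`. -/
def partitionMatrix {N n : ℕ} (A : Fin n → Finset (Fin N)) :
    Matrix (Fin N) (Fin n) ℝ :=
  fun i ℓ => if i ∈ A ℓ then 1 else 0

/-- The modularity of a partition `A` with resolution parameter `γ`. -/
noncomputable def modularity {N n : ℕ} (W : Matrix (Fin N) (Fin N) ℝ) (k : Fin N → ℝ)
    (twom γ : ℝ) (A : Fin n → Finset (Fin N)) : ℝ :=
  (1 / twom) * ∑ ℓ, ∑ i ∈ A ℓ, ∑ j ∈ A ℓ, (W i j - γ * k i * k j / twom)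

/-- The balanced TV functional `|u|_TV + (γ/2m) ‖kᵀu‖₂²`. -/
noncomputable def balancedTV {N n : ℕ} (W : Matrix (Fin N) (Fin N) ℝ) (k : Fin N → ℝ)
    (twom γ : ℝ) (u : Matrix (Fin N) (Fin n) ℝ) : ℝ :=
  graphTVMat W u + (γ / twom) * ∑ ℓ, (∑ i, k i * u i ℓ) ^ 2

section PartitionMatrix

variable {N n : ℕ} {A : Fin n → Finset (Fin N)}

theorem IsPartition.sum_partitionMatrix (hA : IsPartition A) (i : Fin N) :
    ∑ ℓ, partitionMatrix A i ℓ = 1 := by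
  obtain ⟨ℓ, hiℓ, huniq⟩ := hA i
  rw [sum_eq_single_of_mem ℓ (mem_univ ℓ)]
  · exact if_pos hiℓ
  · exact fun ℓ' _ hne => if_neg fun h => hne (huniq ℓ' h)

theorem sum_mul_partitionMatrix (f : Fin N → ℝ) (ℓ : Fin n) :
    ∑ i, f i * partitionMatrix A i ℓ = ∑ i ∈ A ℓ, f i := by
  simp [partitionMatrix, mul_ite, sum_ite_mem]

theorem abs_partitionMatrix_sub (ℓ : Fin n) (i j : Fin N) :
    |partitionMatrix A i ℓ - partitionMatrix A j ℓ|
      = partitionMatrix A i ℓ + partitionMatrix A j ℓ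
        - 2 * (partitionMatrix A i ℓ * partitionMatrix A j ℓ) := by
  by_cases hi : i ∈ A ℓ <;> by_cases hj : j ∈ A ℓ <;> simp [partitionMatrix, hi, hj]; norm_num

theorem IsPartition.sum_sum_weight_mul_partitionMatrix (hA : IsPartition A)
    (W : Matrix (Fin N) (Fin N) ℝ) (v : Fin N → Fin N → Fin N) :
    ∑ ℓ, ∑ i, ∑ j, W i j * partitionMatrix A (v i j) ℓ = ∑ i, ∑ j, W i j := by
  rw [sum_comm]
  refine sum_congr rfl fun i _ => ?_
  rw [sum_comm]
  simp only [← mul_sum, hA.sum_partitionMatrix, mul_one]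

theorem IsPartition.graphTVMat_partitionMatrix (hA : IsPartition A)
    (W : Matrix (Fin N) (Fin N) ℝ) :
    graphTVMat W (partitionMatrix A)
      = ∑ i, ∑ j, W i j - ∑ ℓ, ∑ i ∈ A ℓ, ∑ j ∈ A ℓ, W i j := by
  have hintra : ∀ ℓ, ∑ i, ∑ j, W i j * (partitionMatrix A i ℓ * partitionMatrix A j ℓ)
      = ∑ i ∈ A ℓ, ∑ j ∈ A ℓ, W i j := fun ℓ => by
    simp only [← mul_assoc, sum_mul_partitionMatrix, ← sum_mul]
  have hsplit : ∀ ℓ, graphTV W (fun i => partitionMatrix A i ℓ)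
      = (1 / 2) * (∑ i, ∑ j, W i j * partitionMatrix A i ℓ
          + ∑ i, ∑ j, W i j * partitionMatrix A j ℓ)
        - ∑ i ∈ A ℓ, ∑ j ∈ A ℓ, W i j := fun ℓ => by
    simp only [graphTV, abs_partitionMatrix_sub, mul_sub, mul_add, sum_sub_distrib,
      sum_add_distrib, mul_left_comm _ (2 : ℝ), ← mul_sum, ← hintra]
    ring
  simp only [graphTVMat, hsplit, sum_sub_distrib, ← mul_sum, sum_add_distrib,
    hA.sum_sum_weight_mul_partitionMatrix W (fun i _ => i),
    hA.sum_sum_weight_mul_partitionMatrix W (fun _ j => j)]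
  ring

end PartitionMatrix

theorem graphVol_sq {N : ℕ} (k : Fin N → ℝ) (S : Finset (Fin N)) :
    graphVol k S ^ 2 = ∑ i ∈ S, ∑ j ∈ S, k i * k j := by
  rw [graphVol, sq, sum_mul_sum]

theorem modularity_eq_intra_sub_graphVol_sq {N n : ℕ} (W : Matrix (Fin N) (Fin N) ℝ)
    (k : Fin N → ℝ) (twom γ : ℝ) (A : Fin n → Finset (Fin N)) :
    modularity W k twom γ A
      = (1 / twom) * (∑ ℓ, ∑ i ∈ A ℓ, ∑ j ∈ A ℓ, W i j
          - (γ / twom) * ∑ ℓ, graphVol k (A ℓ) ^ 2) := by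
  simp only [modularity, graphVol_sq, mul_sum, ← sum_sub_distrib]
  congr! 4 with ℓ _ i _ j _
  ring

theorem IsPartition.modularity_eq {N n : ℕ} {A : Fin n → Finset (Fin N)} (hA : IsPartition A)
    (W : Matrix (Fin N) (Fin N) ℝ) (k : Fin N → ℝ) (twom γ : ℝ)
    (htwom : twom = ∑ i, ∑ j, W i j) (htwom_ne : twom ≠ 0) :
    modularity W k twom γ A = 1 - (1 / twom) * balancedTV W k twom γ (partitionMatrix A) := by
  simp only [modularity_eq_intra_sub_graphVol_sq, balancedTV, hA.graphTVMat_partitionMatrix,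
    sum_mul_partitionMatrix, graphVol, ← htwom]
  field_simp
  ring

theorem modularity_eq_one_sub_balancedTV_general
    {N : ℕ} (W : Matrix (Fin N) (Fin N) ℝ)
    (k : Fin N → ℝ) (hk : ∀ i, k i = ∑ j, W i j)
    (twom : ℝ) (htwom : twom = ∑ i, k i) (htwom_pos : 0 < twom)
    (γ : ℝ)
    {nhat : ℕ} (A : Fin nhat → Finset (Fin N)) (hA : IsPartition A) :
    (∀ ℓ, ∑ i, k i * partitionMatrix A i ℓ = graphVol k (A ℓ)) ∧
    (∑ ℓ, (∑ i, k i * partitionMatrix A i ℓ) ^ 2 = ∑ ℓ, (graphVol k (A ℓ)) ^ 2) ∧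
    (modularity W k twom γ A =
      1 - (1 / twom) * balancedTV W k twom γ (partitionMatrix A)) ∧
    ((∀ (n' : ℕ) (A' : Fin n' → Finset (Fin N)), IsPartition A' →
        modularity W k twom γ A' ≤ modularity W k twom γ A) ↔
     (∀ (n' : ℕ) (A' : Fin n' → Finset (Fin N)), IsPartition A' →
        balancedTV W k twom γ (partitionMatrix A) ≤
          balancedTV W k twom γ (partitionMatrix A'))) := by
  have hvol : ∀ ℓ, ∑ i, k i * partitionMatrix A i ℓ = graphVol k (A ℓ) :=
    sum_mul_partitionMatrix k
  have htotal : twom = ∑ i, ∑ j, W i j := htwom.trans (sum_congr rfl fun i _ => hk i)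
  have hQ : ∀ {n'} {A' : Fin n' → Finset (Fin N)}, IsPartition A' →
      modularity W k twom γ A' = 1 - (1 / twom) * balancedTV W k twom γ (partitionMatrix A') :=
    fun hA' => hA'.modularity_eq W k twom γ htotal htwom_pos.ne'
  refine ⟨hvol, by simp only [hvol], hQ hA, ?_⟩
  refine forall₂_congr fun n' A' => imp_congr_right fun hA' => ?_
  rw [hQ hA', hQ hA, sub_le_sub_iff_left, mul_le_mul_iff_right₀ (by positivity)]

theorem modularity_eq_one_sub_balancedTV
    {N : ℕ} (hN : 1 ≤ N) (W : Matrix (Fin N) (Fin N) ℝ)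
    (hWsymm : ∀ i j, W i j = W j i) (hWnonneg : ∀ i j, 0 ≤ W i j)
    (k : Fin N → ℝ) (hk : ∀ i, k i = ∑ j, W i j)
    (twom : ℝ) (htwom : twom = ∑ i, k i) (htwom_pos : 0 < twom)
    (γ : ℝ) (hγ : 0 < γ)
    {nhat : ℕ} (A : Fin nhat → Finset (Fin N)) (hA : IsPartition A) :
    (∀ ℓ, ∑ i, k i * partitionMatrix A i ℓ = graphVol k (A ℓ)) ∧
    (∑ ℓ, (∑ i, k i * partitionMatrix A i ℓ) ^ 2 = ∑ ℓ, (graphVol k (A ℓ)) ^ 2) ∧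
    (modularity W k twom γ A =
      1 - (1 / twom) * balancedTV W k twom γ (partitionMatrix A)) ∧
    ((∀ (n' : ℕ) (A' : Fin n' → Finset (Fin N)), IsPartition A' →
        modularity W k twom γ A' ≤ modularity W k twom γ A) ↔
     (∀ (n' : ℕ) (A' : Fin n' → Finset (Fin N)), IsPartition A' →
        balancedTV W k twom γ (partitionMatrix A) ≤
          balancedTV W k twom γ (partitionMatrix A'))) :=
  modularity_eq_one_sub_balancedTV_general W k hk twom htwom htwom_pos γ A hA
end

section
/- Let γ > 0, n̂ ≥ 1, and let F(u) = |u|_TV + (γ/(2m)) ‖kᵀu‖₂² be the balanced TV functional on Π(G, n̂). Let C be the convex hull of Π(G, n̂) and let F̃ : C → ℝ be any convex function with F̃(u) = F(u) for all u ∈ Π(G, n̂) (a not-necessarily-symmetric convex relaxation). Then the constant matrix J ∈ C, all of whose entries equal 1/n̂, satisfies F̃(J) ≤ F(u) for every u ∈ Π(G, n̂); that is, the trivial matrix J has an objective value at least as good as any partition matrix. -/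
/-
Cyclically shifting the columns of a partition matrix `u` (relabelling the parts) gives again a
partition matrix with the same balanced TV value, and since every row of `u` sums to one, the
average of the `n̂` shifts is the constant matrix `J`. So `J` is a convex combination of
partition matrices, and by the maximum principle for convex functions `F̃(J)` is at most the
value of `F̃ = F` at one of the shifts of `u`, which is `F(u)`.
-/

open Finset

/-- The set `Π(G, n̂)` of partition matrices of partitions into `n̂` parts. -/
def partitionMatrices (N n : ℕ) : Set (Matrix (Fin N) (Fin n) ℝ) :=
  {u | ∃ A : Fin n → Finset (Fin N), IsPartition A ∧ u = partitionMatrix A}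

section ColumnShifts

variable {m ι : Type*} [Fintype ι] [AddGroup ι]

def columnShifts (u : Matrix m ι ℝ) : Set (Matrix m ι ℝ) :=
  Set.range fun s => u.submatrix id (Equiv.subRight s)

theorem sum_smul_submatrix_subRight (u : Matrix m ι ℝ) (c : ℝ) :
    ∑ s, c • u.submatrix id (Equiv.subRight s) = fun i _ => c * ∑ ℓ, u i ℓ := by
  funext i ℓ
  simp only [Matrix.sum_apply, Matrix.smul_apply, Matrix.submatrix_apply, id,
    Equiv.subRight_apply, smul_eq_mul, ← Finset.mul_sum]
  congr 1
  exact Fintype.sum_equiv (Equiv.subLeft ℓ) _ _ fun _ => rfl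

theorem const_mem_convexHull_columnShifts [Nonempty ι] {u : Matrix m ι ℝ}
    (hrow : ∀ i, ∑ ℓ, u i ℓ = 1) :
    (fun _ _ => (Fintype.card ι : ℝ)⁻¹) ∈ convexHull ℝ (columnShifts u) := by
  have hcard : (Fintype.card ι : ℝ) ≠ 0 := Nat.cast_ne_zero.mpr Fintype.card_ne_zero
  have hJ := sum_smul_submatrix_subRight u (Fintype.card ι : ℝ)⁻¹
  simp only [hrow, mul_one] at hJ
  rw [← hJ]
  refine (convex_convexHull ℝ _).sum_mem (fun _ _ => by positivity) ?_
    fun s _ => subset_convexHull ℝ _ ⟨s, rfl⟩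
  rw [Finset.sum_const, Finset.card_univ, nsmul_eq_mul, mul_inv_cancel₀ hcard]

end ColumnShifts

section Partitions

variable {N n : ℕ}

theorem IsPartition.comp_equiv {A : Fin n → Finset (Fin N)} (hA : IsPartition A)
    (σ : Equiv.Perm (Fin n)) : IsPartition (A ∘ σ) := by
  intro i
  obtain ⟨ℓ, hℓ, huniq⟩ := hA i
  refine ⟨σ.symm ℓ, by simpa using hℓ, fun ℓ' hℓ' => ?_⟩
  rw [← huniq _ hℓ', Equiv.symm_apply_apply]

theorem IsPartition.sum_partitionMatrix_row {A : Fin n → Finset (Fin N)} (hA : IsPartition A)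
    (i : Fin N) : ∑ ℓ, partitionMatrix A i ℓ = 1 := by
  obtain ⟨ℓ, hℓ, huniq⟩ := hA i
  rw [Finset.sum_eq_single ℓ]
  · exact if_pos hℓ
  · exact fun ℓ' _ hne => if_neg fun h => hne (huniq ℓ' h)
  · simp

theorem submatrix_mem_partitionMatrices {u : Matrix (Fin N) (Fin n) ℝ}
    (hu : u ∈ partitionMatrices N n) (σ : Equiv.Perm (Fin n)) :
    u.submatrix id σ ∈ partitionMatrices N n := by
  obtain ⟨A, hA, rfl⟩ := hu
  exact ⟨A ∘ σ, hA.comp_equiv σ, rfl⟩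

theorem partitionMatrices_nonempty [NeZero n] : (partitionMatrices N n).Nonempty := by
  refine ⟨_, fun ℓ => if ℓ = 0 then Finset.univ else ∅, fun i => ⟨0, by simp, ?_⟩, rfl⟩
  intro ℓ hℓ
  by_contra hne
  simp [hne] at hℓ

theorem const_mem_convexHull_columnShifts_of_mem_partitionMatrices [NeZero n]
    {u : Matrix (Fin N) (Fin n) ℝ} (hu : u ∈ partitionMatrices N n) :
    (fun _ _ => (n : ℝ)⁻¹) ∈ convexHull ℝ (columnShifts u) := by
  obtain ⟨A, hA, rfl⟩ := hu
  simpa using const_mem_convexHull_columnShifts hA.sum_partitionMatrix_row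

theorem columnShifts_subset_partitionMatrices [NeZero n] {u : Matrix (Fin N) (Fin n) ℝ}
    (hu : u ∈ partitionMatrices N n) : columnShifts u ⊆ partitionMatrices N n := by
  rintro _ ⟨s, rfl⟩
  exact submatrix_mem_partitionMatrices hu _

theorem balancedTV_submatrix_equiv (W : Matrix (Fin N) (Fin N) ℝ) (k : Fin N → ℝ)
    (twom γ : ℝ) (u : Matrix (Fin N) (Fin n) ℝ) (σ : Equiv.Perm (Fin n)) :
    balancedTV W k twom γ (u.submatrix id σ) = balancedTV W k twom γ u := by
  unfold balancedTV graphTVMat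
  congr 1
  · exact Equiv.sum_comp σ fun ℓ => graphTV W fun i => u i ℓ
  · congr 1
    exact Equiv.sum_comp σ fun ℓ => (∑ i, k i * u i ℓ) ^ 2

end Partitions

theorem nonsymmetric_convex_relaxation_trivial_value_general
    {N : ℕ} (W : Matrix (Fin N) (Fin N) ℝ) (k : Fin N → ℝ) (twom : ℝ)
    (γ : ℝ) {nhat : ℕ} (hnhat : 1 ≤ nhat)
    (C : Set (Matrix (Fin N) (Fin nhat) ℝ))
    (hC : C = convexHull ℝ (partitionMatrices N nhat))
    (F : Matrix (Fin N) (Fin nhat) ℝ → ℝ)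
    (hFconv : ConvexOn ℝ C F)
    (hFrelax : ∀ u ∈ partitionMatrices N nhat, F u = balancedTV W k twom γ u) :
    (fun (_ : Fin N) (_ : Fin nhat) => (nhat : ℝ)⁻¹) ∈ C ∧
    ∀ u ∈ partitionMatrices N nhat,
      F (fun (_ : Fin N) (_ : Fin nhat) => (nhat : ℝ)⁻¹) ≤ balancedTV W k twom γ u := by
  have : NeZero nhat := ⟨by omega⟩
  have hshifts_sub_C : ∀ u ∈ partitionMatrices N nhat, columnShifts u ⊆ C := fun u hu =>
    hC ▸ (columnShifts_subset_partitionMatrices hu).trans (subset_convexHull ℝ _)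
  obtain ⟨u₀, hu₀⟩ := partitionMatrices_nonempty (N := N) (n := nhat)
  refine ⟨hC ▸ convexHull_mono (columnShifts_subset_partitionMatrices hu₀)
    (const_mem_convexHull_columnShifts_of_mem_partitionMatrices hu₀), fun u hu => ?_⟩
  obtain ⟨_, ⟨s, rfl⟩, hle⟩ := hFconv.exists_ge_of_mem_convexHull (hshifts_sub_C u hu)
    (const_mem_convexHull_columnShifts_of_mem_partitionMatrices hu)
  rwa [hFrelax _ (submatrix_mem_partitionMatrices hu _), balancedTV_submatrix_equiv] at hle

theorem nonsymmetric_convex_relaxation_trivial_value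
    {N : ℕ} (hN : 1 ≤ N) (W : Matrix (Fin N) (Fin N) ℝ)
    (hWsymm : ∀ i j, W i j = W j i) (hWnonneg : ∀ i j, 0 ≤ W i j)
    (k : Fin N → ℝ) (hk : ∀ i, k i = ∑ j, W i j)
    (twom : ℝ) (htwom : twom = ∑ i, k i) (htwom_pos : 0 < twom)
    (γ : ℝ) (hγ : 0 < γ) {nhat : ℕ} (hnhat : 1 ≤ nhat)
    (C : Set (Matrix (Fin N) (Fin nhat) ℝ))
    (hC : C = convexHull ℝ (partitionMatrices N nhat))
    (F : Matrix (Fin N) (Fin nhat) ℝ → ℝ)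
    (hFconv : ConvexOn ℝ C F)
    (hFrelax : ∀ u ∈ partitionMatrices N nhat, F u = balancedTV W k twom γ u) :
    (fun (_ : Fin N) (_ : Fin nhat) => (nhat : ℝ)⁻¹) ∈ C ∧
    ∀ u ∈ partitionMatrices N nhat,
      F (fun (_ : Fin N) (_ : Fin nhat) => (nhat : ℝ)⁻¹) ≤ balancedTV W k twom γ u :=
  nonsymmetric_convex_relaxation_trivial_value_general W k twom γ hnhat C hC F hFconv hFrelax
end

section
/- Let γ > 0, M = L + (γ/m) k kᵀ with L = diag(k) − W, and k_max = max_i k_i. Let u₀ ∈ ℝ^N be any vector with ‖u₀‖_∞ ≤ 1 and let u(τ) = exp(−τ M) u₀ (the solution at time τ ≥ 0 of du/dt = −M u with u(0) = u₀). Then ‖u(τ) − u₀‖_∞ ≤ e^{2(γ+1) k_max τ} − 1. -/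
/-!
In the ∞-operator norm, the row of `M` at `i` has absolute sum at most `2 (γ + 1) k i`: the
Laplacian row contributes `k i` on and `k i` off the diagonal, the rank-one term
`(γ / m) k i · 2m`. So `‖τ M‖ ≤ 2 (γ + 1) kmax τ`, and comparing the exponential series termwise
gives `‖exp A - 1‖ ≤ e^‖A‖ - 1` in any Banach algebra.
-/

open Finset Matrix Nat

attribute [local instance] Matrix.linftyOpSeminormedAddCommGroup Matrix.linftyOpNormedRing
  Matrix.linftyOpNormedAlgebra

lemma NormedSpace.norm_exp_sub_one_le {𝔸 : Type*} [NormedRing 𝔸] [NormedAlgebra ℝ 𝔸]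
    [CompleteSpace 𝔸] (x : 𝔸) : ‖exp x - 1‖ ≤ Real.exp ‖x‖ - 1 := by
  have hA := hasSum_ite_sub_hasSum (exp_series_hasSum_exp' (𝕂 := ℝ) x) 0
  have hR := hasSum_ite_sub_hasSum (exp_series_hasSum_exp' (𝕂 := ℝ) ‖x‖) 0
  rw [← Real.exp_eq_exp_ℝ] at hR
  simp only [pow_zero, factorial_zero, cast_one, inv_one, one_smul] at hA hR
  refine hA.norm_le_of_bounded hR fun n => ?_
  split_ifs with hn
  · simp
  · rw [norm_smul, Real.norm_of_nonneg (by positivity), smul_eq_mul]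
    exact mul_le_mul_of_nonneg_left (norm_pow_le' x (Nat.pos_of_ne_zero hn)) (by positivity)

namespace Matrix

lemma linfty_opNorm_le_of_forall_sum_norm_le {m n α : Type*} [Fintype m] [Fintype n]
    [SeminormedAddCommGroup α] {A : Matrix m n α} {c : ℝ} (hc : 0 ≤ c)
    (h : ∀ i, ∑ j, ‖A i j‖ ≤ c) : ‖A‖ ≤ c := by
  lift c to NNReal using hc
  rw [linfty_opNorm_def, NNReal.coe_le_coe]
  exact Finset.sup_le fun i _ => by rw [← NNReal.coe_le_coe]; push_cast; exact h i

lemma norm_exp_mulVec_sub_le {n : Type*} [Fintype n] [DecidableEq n] (A : Matrix n n ℝ)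
    (u : n → ℝ) : ‖NormedSpace.exp A *ᵥ u - u‖ ≤ (Real.exp ‖A‖ - 1) * ‖u‖ := by
  calc ‖NormedSpace.exp A *ᵥ u - u‖ = ‖(NormedSpace.exp A - 1) *ᵥ u‖ := by
        rw [sub_mulVec, one_mulVec]
    _ ≤ ‖NormedSpace.exp A - 1‖ * ‖u‖ := linfty_opNorm_mulVec _ _
    _ ≤ (Real.exp ‖A‖ - 1) * ‖u‖ := by gcongr; exact NormedSpace.norm_exp_sub_one_le A

end Matrix

section WeightedGraph

variable {n : Type*} [Fintype n] [DecidableEq n] {W : Matrix n n ℝ} {k : n → ℝ}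

lemma sum_abs_diagonal_sub_apply_le (hW : ∀ i j, 0 ≤ W i j) (hk : ∀ i, k i = ∑ j, W i j)
    (i : n) : ∑ j, |(diagonal k - W) i j| ≤ 2 * k i := by
  have hki : 0 ≤ k i := hk i ▸ sum_nonneg fun j _ => hW i j
  calc ∑ j, |(diagonal k - W) i j| ≤ ∑ j, (diagonal k i j + W i j) := by
        refine sum_le_sum fun j _ => (abs_sub _ _).trans_eq ?_
        rw [abs_of_nonneg (hW i j), abs_of_nonneg (diagonal_apply k i j ▸ ite_nonneg hki le_rfl)]
    _ = 2 * k i := by simp [sum_add_distrib, diagonal_apply, ← hk]; ring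

lemma sum_abs_laplacian_add_smul_outer_apply_le (hW : ∀ i j, 0 ≤ W i j)
    (hk : ∀ i, k i = ∑ j, W i j) {m γ : ℝ} (hm : 2 * m = ∑ j, k j) (hm0 : 0 < m) (hγ : 0 ≤ γ)
    (i : n) :
    ∑ j, |(diagonal k - W + (γ / m) • of fun i j => k i * k j) i j| ≤ 2 * (γ + 1) * k i := by
  have hk0 : ∀ i, 0 ≤ k i := fun i => hk i ▸ sum_nonneg fun j _ => hW i j
  calc ∑ j, |(diagonal k - W + (γ / m) • of fun i j => k i * k j) i j|
      ≤ ∑ j, (|(diagonal k - W) i j| + γ / m * (k i * k j)) := by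
        refine sum_le_sum fun j _ => (abs_add_le _ _).trans_eq ?_
        rw [Matrix.smul_apply, of_apply, smul_eq_mul,
          abs_of_nonneg (mul_nonneg (div_nonneg hγ hm0.le) (mul_nonneg (hk0 i) (hk0 j)))]
    _ = ∑ j, |(diagonal k - W) i j| + 2 * γ * k i := by
        rw [sum_add_distrib, ← mul_sum, ← mul_sum, ← hm]; field_simp
    _ ≤ 2 * (γ + 1) * k i := by linarith [sum_abs_diagonal_sub_apply_le hW hk i]

end WeightedGraph

theorem diffusion_sup_bound_general
    {N : ℕ} (W : Matrix (Fin N) (Fin N) ℝ)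
    (hWnonneg : ∀ i j, 0 ≤ W i j)
    (k : Fin N → ℝ) (hk : ∀ i, k i = ∑ j, W i j)
    (twom : ℝ) (htwom : twom = ∑ i, k i) (htwom_pos : 0 < twom)
    (m : ℝ) (hm : m = twom / 2)
    (γ : ℝ) (hγ : 0 < γ)
    (L : Matrix (Fin N) (Fin N) ℝ) (hL : L = Matrix.diagonal k - W)
    (M : Matrix (Fin N) (Fin N) ℝ)
    (hM : M = L + (γ / m) • Matrix.of (fun i j => k i * k j))
    (kmax : ℝ) (hkmax : IsGreatest (Set.range k) kmax)
    (u₀ : Fin N → ℝ) (hu₀ : ∀ i, |u₀ i| ≤ 1)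
    (τ : ℝ) (hτ : 0 ≤ τ) :
    ∀ i, |(NormedSpace.exp (-(τ • M))).mulVec u₀ i - u₀ i| ≤
      Real.exp (2 * (γ + 1) * kmax * τ) - 1 := by
  obtain ⟨⟨p, rfl⟩, hmax⟩ := hkmax
  have hkp : 0 ≤ k p := hk p ▸ sum_nonneg fun j _ => hWnonneg p j
  have hMnorm : ‖M‖ ≤ 2 * (γ + 1) * k p := by
    refine linfty_opNorm_le_of_forall_sum_norm_le (by positivity) fun i => ?_
    subst hM hL
    refine (sum_abs_laplacian_add_smul_outer_apply_le hWnonneg hk (by linarith) (by linarith)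
      hγ.le i).trans ?_
    gcongr
    exact hmax ⟨i, rfl⟩
  have hu₀_norm : ‖u₀‖ ≤ 1 := pi_norm_le_iff_of_nonneg zero_le_one |>.mpr hu₀
  intro i
  calc _ ≤ ‖NormedSpace.exp (-(τ • M)) *ᵥ u₀ - u₀‖ := norm_le_pi_norm _ i
    _ ≤ (Real.exp ‖-(τ • M)‖ - 1) * ‖u₀‖ := norm_exp_mulVec_sub_le _ u₀
    _ ≤ Real.exp ‖-(τ • M)‖ - 1 :=
      mul_le_of_le_one_right (sub_nonneg.2 (Real.one_le_exp (norm_nonneg _))) hu₀_norm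
    _ ≤ Real.exp (2 * (γ + 1) * k p * τ) - 1 := by
      rw [norm_neg, norm_smul, Real.norm_of_nonneg hτ]
      gcongr Real.exp ?_ - 1
      linarith [mul_le_mul_of_nonneg_left hMnorm hτ]

theorem diffusion_sup_bound
    {N : ℕ} (hN : 1 ≤ N) (W : Matrix (Fin N) (Fin N) ℝ)
    (hWsymm : ∀ i j, W i j = W j i) (hWnonneg : ∀ i j, 0 ≤ W i j)
    (k : Fin N → ℝ) (hk : ∀ i, k i = ∑ j, W i j)
    (twom : ℝ) (htwom : twom = ∑ i, k i) (htwom_pos : 0 < twom)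
    (m : ℝ) (hm : m = twom / 2)
    (γ : ℝ) (hγ : 0 < γ)
    (L : Matrix (Fin N) (Fin N) ℝ) (hL : L = Matrix.diagonal k - W)
    (M : Matrix (Fin N) (Fin N) ℝ)
    (hM : M = L + (γ / m) • Matrix.of (fun i j => k i * k j))
    (kmax : ℝ) (hkmax : IsGreatest (Set.range k) kmax)
    (u₀ : Fin N → ℝ) (hu₀ : ∀ i, |u₀ i| ≤ 1)
    (τ : ℝ) (hτ : 0 ≤ τ) :
    ∀ i, |(NormedSpace.exp (-(τ • M))).mulVec u₀ i - u₀ i| ≤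
      Real.exp (2 * (γ + 1) * kmax * τ) - 1 :=
  diffusion_sup_bound_general W hWnonneg k hk twom htwom htwom_pos m hm γ hγ L hL M hM kmax hkmax u₀
    hu₀ τ hτ
end

section
/- Let γ > 0, M = L + (γ/m) k kᵀ with L = diag(k) − W, and k_max = max_i k_i > 0. Let v₀ ∈ {−1, 1}^N and let v(τ) = exp(−τ M) v₀. If 0 ≤ τ < (log 2) / (2(γ + 1) k_max), then v(τ)_i has the same (strict) sign as (v₀)_i for every node i: (v₀)_i · v(τ)_i > 0. Consequently, for two communities the MBO thresholding step leaves the partition unchanged (the iteration is stationary) for any timestep below this bound. -/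
/-!
In the ∞-operator norm (maximal absolute row sum) the Laplacian has norm at most `2 kmax` and the
rank-one term `(γ / m) k kᵀ` has norm at most `(γ / m) kmax · 2m = 2 γ kmax`. Below the time-step
bound therefore `‖τ M‖ < log 2`, and the exponential series gives
`‖exp (-τ M) - 1‖ ≤ exp ‖τ M‖ - 1 < 1`. As `‖v₀‖ = 1`, each entry of `exp (-τ M) v₀` lies within
distance less than `1` of the entry `±1` of `v₀`, hence has the same sign.
-/

open Finset Matrix

section ExpBound

variable {A : Type*} [NormedRing A] [NormedAlgebra ℝ A] [CompleteSpace A]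

theorem norm_exp_sub_one_le_exp_norm_sub_one (x : A) :
    ‖NormedSpace.exp x - 1‖ ≤ Real.exp ‖x‖ - 1 := by
  have hsum : Summable fun n : ℕ => (n.factorial : ℝ)⁻¹ • x ^ n :=
    NormedSpace.expSeries_summable' x
  rw [congrFun (NormedSpace.exp_eq_tsum ℝ) x, hsum.tsum_eq_zero_add]
  simp only [Nat.factorial_zero, Nat.cast_one, inv_one, pow_zero, one_smul, add_sub_cancel_left]
  have hexp : HasSum (fun n : ℕ => ‖x‖ ^ n / n.factorial) (Real.exp ‖x‖) := by
    simpa [← Real.exp_eq_exp_ℝ] using NormedSpace.expSeries_div_hasSum_exp ‖x‖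
  have htail : HasSum (fun n : ℕ => ‖x‖ ^ (n + 1) / (n + 1).factorial) (Real.exp ‖x‖ - 1) := by
    simpa using (hasSum_nat_add_iff' 1).2 hexp
  refine tsum_of_norm_bounded htail fun n => ?_
  rw [norm_smul, norm_inv, Real.norm_natCast, div_eq_inv_mul]
  gcongr
  exact norm_pow_le' x n.succ_pos

theorem norm_exp_sub_one_lt_one {x : A} (hx : ‖x‖ < Real.log 2) :
    ‖NormedSpace.exp x - 1‖ < 1 := by
  have : Real.exp ‖x‖ < 2 := by
    simpa [Real.exp_log two_pos] using Real.exp_lt_exp.2 hx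
  linarith [norm_exp_sub_one_le_exp_norm_sub_one x]

end ExpBound

namespace Matrix

attribute [local instance] Matrix.linftyOpSeminormedAddCommGroup Matrix.linftyOpNormedSpace
  Matrix.linftyOpNormedRing Matrix.linftyOpNormedAlgebra

variable {m n : Type*} [Fintype m] [Fintype n]

theorem linfty_opNorm_le_of_row_sum_le {A : Matrix m n ℝ} {C : ℝ} (hC : 0 ≤ C)
    (h : ∀ i, ∑ j, |A i j| ≤ C) : ‖A‖ ≤ C := by
  rw [linfty_opNorm_def, ← Real.coe_toNNReal C hC, NNReal.coe_le_coe]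
  refine Finset.sup_le fun i _ => ?_
  rw [← NNReal.coe_le_coe, NNReal.coe_sum, Real.coe_toNNReal C hC]
  simpa [Real.norm_eq_abs] using h i

theorem pos_mul_mulVec_apply_of_norm_sub_one_lt_one [DecidableEq n] {A : Matrix n n ℝ}
    (hA : ‖A - 1‖ < 1) {v : n → ℝ} (hv : ∀ i, |v i| = 1) (i : n) :
    0 < v i * (A *ᵥ v) i := by
  have hv_norm : ‖v‖ ≤ 1 :=
    (pi_norm_le_iff_of_nonneg (x := v) zero_le_one).2 fun j => (hv j).le
  have hdev : |(A *ᵥ v) i - v i| < 1 := calc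
    |(A *ᵥ v) i - v i| = |((A - 1) *ᵥ v) i| := by simp [sub_mulVec]
    _ ≤ ‖(A - 1) *ᵥ v‖ := by simpa [Real.norm_eq_abs] using norm_le_pi_norm ((A - 1) *ᵥ v) i
    _ ≤ ‖A - 1‖ * ‖v‖ := linfty_opNorm_mulVec _ _
    _ ≤ ‖A - 1‖ := mul_le_of_le_one_right (norm_nonneg _) hv_norm
    _ < 1 := hA
  have hsq : v i * v i = 1 := by rw [← abs_mul_self, abs_mul, hv i, one_mul]
  have hcross : -(1 : ℝ) < v i * ((A *ᵥ v) i - v i) := by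
    have := neg_abs_le (v i * ((A *ᵥ v) i - v i))
    rw [abs_mul, hv i, one_mul] at this
    linarith
  nlinarith

variable {W : Matrix n n ℝ} {k : n → ℝ} {kmax : ℝ}

theorem linfty_opNorm_diagonal_sub_le [DecidableEq n] (hW : ∀ i j, 0 ≤ W i j)
    (hk : ∀ i, k i = ∑ j, W i j) (hk_le : ∀ i, k i ≤ kmax) (hkmax : 0 ≤ kmax) :
    ‖diagonal k - W‖ ≤ 2 * kmax := by
  have hk_nonneg : ∀ i, 0 ≤ k i := fun i => hk i ▸ sum_nonneg fun j _ => hW i j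
  refine linfty_opNorm_le_of_row_sum_le (by positivity) fun i => ?_
  calc ∑ j, |(diagonal k - W) i j| ≤ ∑ j, (diagonal k i j + W i j) := by
        refine sum_le_sum fun j _ => (abs_sub _ _).trans_eq ?_
        rw [abs_of_nonneg (hW i j), abs_of_nonneg]
        by_cases hij : i = j
        · simp [hij, hk_nonneg j]
        · simp [hij]
    _ = 2 * k i := by simp [sum_add_distrib, diagonal_apply, ← hk i, two_mul]
    _ ≤ 2 * kmax := by linarith [hk_le i]

theorem linfty_opNorm_outer_self_le (hk_nonneg : ∀ i, 0 ≤ k i) (hk_le : ∀ i, k i ≤ kmax)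
    (hkmax : 0 ≤ kmax) : ‖of fun i j => k i * k j‖ ≤ kmax * ∑ j, k j := by
  have hsum : 0 ≤ ∑ j, k j := sum_nonneg fun j _ => hk_nonneg j
  refine linfty_opNorm_le_of_row_sum_le (by positivity) fun i => ?_
  calc ∑ j, |(of fun i j => k i * k j) i j| = k i * ∑ j, k j := by
        simp [abs_of_nonneg (hk_nonneg _), mul_sum]
    _ ≤ kmax * ∑ j, k j := by gcongr; exact hk_le i

theorem linfty_opNorm_modularity_le [DecidableEq n] (hW : ∀ i j, 0 ≤ W i j)
    (hk : ∀ i, k i = ∑ j, W i j) (hk_le : ∀ i, k i ≤ kmax) (hkmax : 0 ≤ kmax)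
    {γ m : ℝ} (hγ : 0 ≤ γ) (hm : 0 < m) (hk_sum : ∑ j, k j = 2 * m) :
    ‖diagonal k - W + (γ / m) • of fun i j => k i * k j‖ ≤ 2 * (γ + 1) * kmax := by
  have hk_nonneg : ∀ i, 0 ≤ k i := fun i => hk i ▸ sum_nonneg fun j _ => hW i j
  calc ‖diagonal k - W + (γ / m) • of fun i j => k i * k j‖
      ≤ ‖diagonal k - W‖ + ‖(γ / m) • (of fun i j => k i * k j : Matrix n n ℝ)‖ :=
        norm_add_le _ _
    _ = ‖diagonal k - W‖ + γ / m * ‖(of fun i j => k i * k j : Matrix n n ℝ)‖ := by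
        rw [norm_smul, Real.norm_of_nonneg (by positivity)]
    _ ≤ 2 * kmax + γ / m * (kmax * (2 * m)) := by
        rw [← hk_sum]
        gcongr
        · exact linfty_opNorm_diagonal_sub_le hW hk hk_le hkmax
        · exact linfty_opNorm_outer_self_le hk_nonneg hk_le hkmax
    _ = 2 * (γ + 1) * kmax := by field_simp; ring

end Matrix

theorem mbo_stationary_below_timestep_bound_general
    {N : ℕ} (W : Matrix (Fin N) (Fin N) ℝ)
    (hWnonneg : ∀ i j, 0 ≤ W i j)
    (k : Fin N → ℝ) (hk : ∀ i, k i = ∑ j, W i j)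
    (twom : ℝ) (htwom : twom = ∑ i, k i) (htwom_pos : 0 < twom)
    (m : ℝ) (hm : m = twom / 2)
    (γ : ℝ) (hγ : 0 < γ)
    (L : Matrix (Fin N) (Fin N) ℝ) (hL : L = Matrix.diagonal k - W)
    (M : Matrix (Fin N) (Fin N) ℝ)
    (hM : M = L + (γ / m) • Matrix.of (fun i j => k i * k j))
    (kmax : ℝ) (hkmax : IsGreatest (Set.range k) kmax)
    (v₀ : Fin N → ℝ) (hv₀ : ∀ i, v₀ i = 1 ∨ v₀ i = -1)
    (τ : ℝ) (hτ : 0 ≤ τ) (hτlt : τ < Real.log 2 / (2 * (γ + 1) * kmax)) :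
    ∀ i, 0 < v₀ i * (NormedSpace.exp (-(τ • M))).mulVec v₀ i := by
  let := Matrix.linftyOpNormedRing (n := Fin N) (α := ℝ)
  let := Matrix.linftyOpNormedAlgebra (R := ℝ) (n := Fin N) (α := ℝ)
  have hm_pos : 0 < m := by rw [hm]; linarith
  have hk_nonneg : ∀ i, 0 ≤ k i := fun i => hk i ▸ sum_nonneg fun j _ => hWnonneg i j
  have hk_le : ∀ i, k i ≤ kmax := fun i => hkmax.2 ⟨i, rfl⟩
  have hkmax_nonneg : 0 ≤ kmax := by
    obtain ⟨i, hi⟩ := hkmax.1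
    exact hi ▸ hk_nonneg i
  have hM_norm : ‖M‖ ≤ 2 * (γ + 1) * kmax := by
    rw [hM, hL]
    exact linfty_opNorm_modularity_le hWnonneg hk hk_le hkmax_nonneg hγ.le hm_pos
      (by rw [← htwom, hm]; ring)
  have hτM : ‖-(τ • M)‖ < Real.log 2 := calc
    ‖-(τ • M)‖ = τ * ‖M‖ := by rw [norm_neg, norm_smul, Real.norm_of_nonneg hτ]
    _ ≤ τ * (2 * (γ + 1) * kmax) := by gcongr
    _ < Real.log 2 := by
        rcases (by positivity : 0 ≤ 2 * (γ + 1) * kmax).eq_or_lt with hzero | hpos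
        · rw [← hzero, mul_zero]; exact Real.log_pos one_lt_two
        · exact (lt_div_iff₀ hpos).1 hτlt
  refine Matrix.pos_mul_mulVec_apply_of_norm_sub_one_lt_one (norm_exp_sub_one_lt_one hτM) ?_
  intro i
  rcases hv₀ i with h | h <;> simp [h]

theorem mbo_stationary_below_timestep_bound
    {N : ℕ} (hN : 1 ≤ N) (W : Matrix (Fin N) (Fin N) ℝ)
    (hWsymm : ∀ i j, W i j = W j i) (hWnonneg : ∀ i j, 0 ≤ W i j)
    (k : Fin N → ℝ) (hk : ∀ i, k i = ∑ j, W i j)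
    (twom : ℝ) (htwom : twom = ∑ i, k i) (htwom_pos : 0 < twom)
    (m : ℝ) (hm : m = twom / 2)
    (γ : ℝ) (hγ : 0 < γ)
    (L : Matrix (Fin N) (Fin N) ℝ) (hL : L = Matrix.diagonal k - W)
    (M : Matrix (Fin N) (Fin N) ℝ)
    (hM : M = L + (γ / m) • Matrix.of (fun i j => k i * k j))
    (kmax : ℝ) (hkmax : IsGreatest (Set.range k) kmax) (hkmax_pos : 0 < kmax)
    (v₀ : Fin N → ℝ) (hv₀ : ∀ i, v₀ i = 1 ∨ v₀ i = -1)
    (τ : ℝ) (hτ : 0 ≤ τ) (hτlt : τ < Real.log 2 / (2 * (γ + 1) * kmax)) :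
    ∀ i, 0 < v₀ i * (NormedSpace.exp (-(τ • M))).mulVec v₀ i :=
  mbo_stationary_below_timestep_bound_general W hWnonneg k hk twom htwom htwom_pos m hm γ hγ L hL M
    hM kmax hkmax v₀ hv₀ τ hτ hτlt
end
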